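/- Every 0/1-polytope of dimension d (a polytope all of whose vertices lie in {0,1}^d) has graph diameter at most d. -/

import Mathlib

noncomputable section

open Finset

/-- Dot product on `Fin d → ℝ`. -/
def dot {d : ℕ} (a x : Fin d → ℝ) : ℝ := ∑ i, a i * x i

/-- `F` is a face of `P`: the set of maximizers in `P` of some linear functional. -/
def IsFaceOf {d : ℕ} (P F : Set (Fin d → ℝ)) : Prop :=
  ∃ (a : Fin d → ℝ) (b : ℝ), (∀ x ∈ P, dot a x ≤ b) ∧ F = {x ∈ P | dot a x = b}

/-- A vertex is a face of dimension 0, i.e. a singleton face. -/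
def IsVertexOf {d : ℕ} (P : Set (Fin d → ℝ)) (v : Fin d → ℝ) : Prop :=
  IsFaceOf P {v}

/-- An edge is a face which is a nondegenerate segment. -/
def IsEdgeOf {d : ℕ} (P : Set (Fin d → ℝ)) (u v : Fin d → ℝ) : Prop :=
  u ≠ v ∧ IsFaceOf P (segment ℝ u v)

/-- The vertex-edge graph of a polytope. -/
def polytopeGraph {d : ℕ} (P : Set (Fin d → ℝ)) :
    SimpleGraph {v // IsVertexOf P v} where
  Adj u v := IsEdgeOf P u.1 v.1
  symm := ⟨by
    rintro u v ⟨hne, hf⟩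
    exact ⟨hne.symm, by rwa [segment_symm] at hf⟩⟩
  loopless := ⟨by rintro u ⟨hne, -⟩; exact hne rfl⟩

/-- A polytope is the convex hull of finitely many points. -/
def IsPolytope {d : ℕ} (P : Set (Fin d → ℝ)) : Prop :=
  ∃ s : Finset (Fin d → ℝ), P = convexHull ℝ (s : Set (Fin d → ℝ))

/-- The dimension of a set: the dimension of its affine hull. -/
def polyDim {d : ℕ} (P : Set (Fin d → ℝ)) : ℕ :=
  Module.finrank ℝ (vectorSpan ℝ P)

/-- A facet is a face of dimension one less than the polytope. -/
def IsFacetOf {d : ℕ} (P F : Set (Fin d → ℝ)) : Prop :=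
  IsFaceOf P F ∧ polyDim F + 1 = polyDim P

/-- Number of facets of `P`. -/
def facetCount {d : ℕ} (P : Set (Fin d → ℝ)) : ℕ :=
  {F | IsFacetOf P F}.ncard

/-- `P` satisfies the Hirsch bound: graph diameter ≤ #facets − dim. -/
def IsHirsch {d : ℕ} (P : Set (Fin d → ℝ)) : Prop :=
  ∀ u v : {v // IsVertexOf P v},
    (polytopeGraph P).dist u v ≤ facetCount P - polyDim P

/-- The unit cube `[0,1]^d`. -/
def unitCube (d : ℕ) : Set (Fin d → ℝ) := Set.Icc 0 1

/-- Combinatorial equivalence: an isomorphism of face lattices (posets of faces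
ordered by inclusion). -/
def CombEquiv {d e : ℕ} (P : Set (Fin d → ℝ)) (Q : Set (Fin e → ℝ)) : Prop :=
  Nonempty ({F // IsFaceOf P F} ≃o {F // IsFaceOf Q F})

/-- A combinatorial cube: a polytope combinatorially equivalent to `[0,1]^d`. -/
def IsCombCube {d : ℕ} (C : Set (Fin d → ℝ)) : Prop :=
  IsPolytope C ∧ CombEquiv C (unitCube d)

section Aux
variable {d : ℕ}

lemma dot_isLinear (a : Fin d → ℝ) : IsLinearMap ℝ (dot a) := by
  constructor
  · intro x y; simp [dot, mul_add, Finset.sum_add_distrib]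
  · intro t x; simp [dot, Finset.mul_sum, mul_left_comm]

lemma dot_add_left (a b x : Fin d → ℝ) : dot (a + b) x = dot a x + dot b x := by
  simp [dot, add_mul, Finset.sum_add_distrib]

lemma dot_smul_left (t : ℝ) (a x : Fin d → ℝ) : dot (t • a) x = t * dot a x := by
  simp [dot, Finset.mul_sum, mul_assoc]

lemma dot_smul_right (t : ℝ) (a x : Fin d → ℝ) : dot a (t • x) = t * dot a x :=
  (dot_isLinear a).map_smul t x

lemma dot_sub_right (a x y : Fin d → ℝ) : dot a (x - y) = dot a x - dot a y := by
  simp [dot, mul_sub, Finset.sum_sub_distrib]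

lemma hull_bound {V : Set (Fin d → ℝ)} {a : Fin d → ℝ} {b : ℝ}
    (h : ∀ x ∈ V, dot a x ≤ b) : ∀ z ∈ convexHull ℝ V, dot a z ≤ b := fun z hz =>
  convexHull_min h (convex_halfSpace_le (dot_isLinear a) b) hz

lemma face_eq {V : Set (Fin d → ℝ)} {a : Fin d → ℝ} {b : ℝ}
    (hb : ∀ x ∈ V, dot a x ≤ b) :
    {z ∈ convexHull ℝ V | dot a z = b} = convexHull ℝ {x ∈ V | dot a x = b} := by
  apply Set.Subset.antisymm
  · rintro z ⟨hzP, hzb⟩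
    rw [_root_.convexHull_eq] at hzP
    obtain ⟨ι, t, w, zf, hw0, hw1, hzf, hcm⟩ := hzP
    have hdz : dot a z = ∑ i ∈ t, w i * dot a (zf i) := by
      rw [← hcm, Finset.centerMass_eq_of_sum_1 _ _ hw1]
      rw [show dot a (∑ i ∈ t, w i • zf i) = ∑ i ∈ t, dot a (w i • zf i) from
        map_sum (IsLinearMap.mk' (dot a) (dot_isLinear a)) _ _]
      exact Finset.sum_congr rfl fun i _ => dot_smul_right _ _ _
    have hsum0 : ∑ i ∈ t, w i * (b - dot a (zf i)) = 0 := by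
      have : ∑ i ∈ t, w i * (b - dot a (zf i))
          = (∑ i ∈ t, w i * b) - ∑ i ∈ t, w i * dot a (zf i) := by
        rw [← Finset.sum_sub_distrib]; exact Finset.sum_congr rfl fun i _ => mul_sub _ _ _
      rw [this, ← Finset.sum_mul, hw1, one_mul, ← hdz, hzb, sub_self]
    have hnn : ∀ i ∈ t, 0 ≤ w i * (b - dot a (zf i)) :=
      fun i hi => mul_nonneg (hw0 i hi) (sub_nonneg.2 (hb _ (hzf i hi)))
    have hkey : ∀ i ∈ t, w i * (b - dot a (zf i)) = 0 :=
      (Finset.sum_eq_zero_iff_of_nonneg hnn).1 hsum0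
    have hmem : ∀ i ∈ {i ∈ t | w i ≠ 0}, zf i ∈ {x | x ∈ V ∧ dot a x = b} := by
      rintro i hi
      rw [Finset.mem_filter] at hi
      obtain ⟨hit, hwi⟩ := hi
      refine ⟨hzf i hit, ?_⟩
      have := hkey i hit
      rcases mul_eq_zero.1 this with h | h
      · exact absurd h hwi
      · linarith [sub_eq_zero.1 h]
    have hz' : {i ∈ t | w i ≠ 0}.centerMass w zf = z := by
      rw [Finset.centerMass_filter_ne_zero]; exact hcm
    rw [← hz']
    refine Finset.centerMass_mem_convexHull _ (fun i hi => hw0 i (Finset.mem_filter.1 hi).1) ?_ hmem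
    · rw [Finset.sum_filter_ne_zero, hw1]; exact one_pos
  · refine convexHull_min ?_ ?_
    · rintro x ⟨hxV, hxb⟩
      exact ⟨subset_convexHull ℝ V hxV, hxb⟩
    · exact (convex_convexHull ℝ V).inter (convex_hyperplane (dot_isLinear a) b)

lemma zo_ineq {p q : ℝ} (hp : p = 0 ∨ p = 1) (hq : q = 0 ∨ q = 1) :
    (2 * p - 1) * q ≤ (2 * p - 1) * p ∧ ((2 * p - 1) * q = (2 * p - 1) * p ↔ q = p) := by
  rcases hp with rfl | rfl <;> rcases hq with rfl | rfl <;> norm_num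

lemma dot_lt_of_ne {x y : Fin d → ℝ} (hx : ∀ i, x i = 0 ∨ x i = 1)
    (hy : ∀ i, y i = 0 ∨ y i = 1) (hne : y ≠ x) :
    dot (fun i => 2 * x i - 1) y < dot (fun i => 2 * x i - 1) x := by
  obtain ⟨i0, hi0⟩ : ∃ i, y i ≠ x i := by
    by_contra h; push_neg at h; exact hne (funext h)
  refine Finset.sum_lt_sum (fun i _ => (zo_ineq (hx i) (hy i)).1) ⟨i0, Finset.mem_univ _, ?_⟩
  exact lt_of_le_of_ne (zo_ineq (hx i0) (hy i0)).1
    (fun h => hi0 ((zo_ineq (hx i0) (hy i0)).2.1 h))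

lemma mem_is_vertex {V : Set (Fin d → ℝ)} (hV : ∀ v ∈ V, ∀ i, v i = 0 ∨ v i = 1)
    {x : Fin d → ℝ} (hx : x ∈ V) : IsVertexOf (convexHull ℝ V) x := by
  set a : Fin d → ℝ := fun i => 2 * x i - 1 with ha
  have hble : ∀ y ∈ V, dot a y ≤ dot a x := by
    intro y hy
    rcases eq_or_ne y x with rfl | hne
    · exact le_rfl
    · exact (dot_lt_of_ne (hV x hx) (hV y hy) hne).le
  have hset : {y ∈ V | dot a y = dot a x} = {x} := by
    apply Set.Subset.antisymm
    · rintro y ⟨hyV, hyb⟩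
      by_contra hne
      exact absurd hyb (dot_lt_of_ne (hV x hx) (hV y hyV) hne).ne
    · rintro y rfl; exact ⟨hx, rfl⟩
  refine ⟨a, dot a x, hull_bound hble, ?_⟩
  rw [face_eq hble, hset, convexHull_singleton]

lemma vertex_mem {V : Set (Fin d → ℝ)} (hfin : V.Finite) {v : Fin d → ℝ}
    (hv : IsVertexOf (convexHull ℝ V) v) : v ∈ V := by
  obtain ⟨a, b, hb, heq⟩ := hv
  have hvP : v ∈ convexHull ℝ V := by
    have : v ∈ ({v} : Set (Fin d → ℝ)) := rfl
    rw [heq] at this; exact this.1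
  have hVne : V.Nonempty := by
    rcases Set.eq_empty_or_nonempty V with rfl | h
    · simp at hvP
    · exact h
  obtain ⟨x0, hx0V, hx0max⟩ := hfin.toFinset.exists_max_image (dot a)
    (by rwa [← Set.Finite.toFinset_nonempty hfin] at hVne)
  rw [Set.Finite.mem_toFinset] at hx0V
  have hmax : ∀ y ∈ V, dot a y ≤ dot a x0 := fun y hy => hx0max y (hfin.mem_toFinset.2 hy)
  have hvb : dot a v = b := by
    have : v ∈ ({v} : Set (Fin d → ℝ)) := rfl
    rw [heq] at this; exact this.2
  have hbx0 : dot a x0 = b := by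
    have h1 : dot a x0 ≤ b := hb x0 (subset_convexHull ℝ V hx0V)
    have h2 : dot a v ≤ dot a x0 := hull_bound hmax v hvP
    linarith
  have hface := face_eq (V := V) (a := a) (b := b) (fun x hx => hb x (subset_convexHull ℝ V hx))
  have : convexHull ℝ {x ∈ V | dot a x = b} = {v} := by
    rw [← hface, ← heq]
  have hx0mem : x0 ∈ convexHull ℝ {x ∈ V | dot a x = b} :=
    subset_convexHull ℝ _ ⟨hx0V, hbx0⟩
  rw [this] at hx0mem
  rw [Set.mem_singleton_iff] at hx0mem
  rwa [← hx0mem]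

lemma dot_self_pos {w : Fin d → ℝ} (hw : w ≠ 0) : 0 < dot w w := by
  obtain ⟨i, hi⟩ : ∃ i, w i ≠ 0 := by
    by_contra h; push_neg at h; exact hw (funext h)
  exact Finset.sum_pos' (fun i _ => mul_self_nonneg _)
    ⟨i, Finset.mem_univ _, mul_self_pos.2 hi⟩

lemma dot_add_right (a x y : Fin d → ℝ) : dot a (x + y) = dot a x + dot a y :=
  (dot_isLinear a).map_add x y

lemma exists_generic (W : Finset (Fin d → ℝ)) (hW : ∀ w ∈ W, w ≠ 0) :
    ∃ c : Fin d → ℝ, ∀ w ∈ W, dot w c ≠ 0 := by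
  classical
  induction W using Finset.induction with
  | empty => exact ⟨0, by simp⟩
  | @insert w W hwW ih =>
    obtain ⟨c, hc⟩ := ih (fun w' hw' => hW w' (Finset.mem_insert_of_mem hw'))
    have hw0 : w ≠ 0 := hW w (Finset.mem_insert_self _ _)
    by_cases hwc : dot w c ≠ 0
    · refine ⟨c, fun w' hw' => ?_⟩
      rcases Finset.mem_insert.1 hw' with rfl | h
      · exact hwc
      · exact hc w' h
    · push_neg at hwc
      set B : Finset ℝ := insert 0 ((W.filter (fun w' => dot w' w ≠ 0)).image
        (fun w' => - dot w' c / dot w' w)) with hB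
      obtain ⟨t, ht⟩ := Infinite.exists_notMem_finset B
      refine ⟨c + t • w, ?_⟩
      have ht0 : t ≠ 0 := fun h => ht (by rw [h, hB]; exact Finset.mem_insert_self _ _)
      intro w' hw'
      rw [dot_add_right, dot_smul_right]
      rcases Finset.mem_insert.1 hw' with rfl | hw'W
      · rw [hwc, zero_add]
        exact mul_ne_zero ht0 (dot_self_pos hw0).ne'
      · by_cases hd : dot w' w = 0
        · rw [hd, mul_zero, add_zero]; exact hc w' hw'W
        · intro habs
          apply ht
          rw [hB]
          refine Finset.mem_insert_of_mem (Finset.mem_image.2 ⟨w', Finset.mem_filter.2 ⟨hw'W, hd⟩, ?_⟩)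
          field_simp
          linarith

lemma dot_comm (a x : Fin d → ℝ) : dot a x = dot x a := by
  simp [dot, mul_comm]

lemma zo_lambda {ui yi xi l : ℝ} (hu : ui = 0 ∨ ui = 1) (hy : yi = 0 ∨ yi = 1)
    (hx : xi = 0 ∨ xi = 1) (hne : yi ≠ ui) (hl : 0 < l)
    (heq : xi - ui = l * (yi - ui)) : l = 1 := by
  rcases hu with rfl | rfl <;> rcases hy with rfl | rfl <;> rcases hx with rfl | rfl <;>
    first | (exact absurd rfl hne) | linarith

lemma exists_edge {V : Set (Fin d → ℝ)} (hfin : V.Finite)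
    (hV : ∀ v ∈ V, ∀ i, v i = 0 ∨ v i = 1)
    {u : Fin d → ℝ} (hu : u ∈ V) (hS : (V \ {u}).Nonempty) :
    ∃ w ∈ V, w ≠ u ∧ IsEdgeOf (convexHull ℝ V) u w := by
  classical
  set a : Fin d → ℝ := fun i => 2 * u i - 1 with ha
  set b : ℝ := dot a u with hb
  have hgap : ∀ x ∈ V, x ≠ u → 0 < b - dot a x := by
    intro x hx hne
    have := dot_lt_of_ne (hV u hu) (hV x hx) hne
    simpa [hb] using sub_pos.2 this
  set D : (Fin d → ℝ) → (Fin d → ℝ) := fun x => (b - dot a x)⁻¹ • (x - u) with hD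
  -- injectivity of D on V \ {u}
  have hinj : ∀ x ∈ V \ {u}, ∀ y ∈ V \ {u}, D x = D y → x = y := by
    rintro x ⟨hxV, hxu⟩ y ⟨hyV, hyu⟩ hxy
    rw [Set.mem_singleton_iff] at hxu hyu
    have hx := hgap x hxV hxu
    have hy := hgap y hyV hyu
    set l : ℝ := (b - dot a x) * (b - dot a y)⁻¹ with hl
    have hlpos : 0 < l := mul_pos hx (inv_pos.2 hy)
    have hxu' : x - u = l • (y - u) := by
      have := congrArg (fun z => (b - dot a x) • z) hxy
      simpa [hD, smul_smul, mul_inv_cancel₀ hx.ne', hl, mul_comm, mul_assoc] using this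
    obtain ⟨i0, hi0⟩ : ∃ i, y i ≠ u i := by
      by_contra h; push_neg at h; exact hyu (funext h)
    have hpt : x i0 - u i0 = l * (y i0 - u i0) := by
      have := congrFun hxu' i0; simpa using this
    have hl1 : l = 1 := zo_lambda (hV u hu i0) (hV y hyV i0) (hV x hxV i0) hi0 hlpos hpt
    rw [hl1, one_smul] at hxu'
    funext i
    have := congrFun hxu' i
    simp only [Pi.sub_apply] at this
    linarith
  have hSfin : (V \ {u}).Finite := hfin.subset Set.diff_subset
  set Sf : Finset (Fin d → ℝ) := hSfin.toFinset with hSf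
  have hSfne : Sf.Nonempty := by rwa [hSf, Set.Finite.toFinset_nonempty]
  set W : Finset (Fin d → ℝ) :=
    ((Sf ×ˢ Sf).filter (fun p => p.1 ≠ p.2)).image (fun p => D p.1 - D p.2) with hW
  have hWne : ∀ w ∈ W, w ≠ 0 := by
    intro w hw
    rw [hW, Finset.mem_image] at hw
    obtain ⟨p, hp, rfl⟩ := hw
    rw [Finset.mem_filter, Finset.mem_product] at hp
    obtain ⟨⟨h1, h2⟩, hne⟩ := hp
    rw [hSf, Set.Finite.mem_toFinset] at h1 h2
    exact sub_ne_zero.2 (fun h => hne (hinj _ h1 _ h2 h))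
  obtain ⟨c, hc⟩ := exists_generic W hWne
  obtain ⟨xs, hxsSf, hxsmax⟩ := Sf.exists_max_image (fun x => dot c (D x)) hSfne
  have hxsS : xs ∈ V \ {u} := by rwa [hSf, Set.Finite.mem_toFinset] at hxsSf
  set m : ℝ := dot c (D xs) with hm
  set f : Fin d → ℝ := c + m • a with hf
  have hcd : ∀ x ∈ V \ {u}, x ≠ xs → dot c (D x) < m := by
    intro x hxS hne
    have hle : dot c (D x) ≤ m := hxsmax x ((Set.Finite.mem_toFinset hSfin).2 hxS)
    refine lt_of_le_of_ne hle (fun h => ?_)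
    have hmem : D x - D xs ∈ W := Finset.mem_image.2
      ⟨(x, xs), Finset.mem_filter.2
        ⟨Finset.mem_product.2 ⟨(Set.Finite.mem_toFinset hSfin).2 hxS, hxsSf⟩, hne⟩, rfl⟩
    apply hc _ hmem
    rw [dot_comm, dot_sub_right, h, hm, sub_self]
  have hcomp : ∀ x ∈ V \ {u}, dot f u - dot f x = (b - dot a x) * (m - dot c (D x)) := by
    rintro x ⟨hxV, hxu⟩
    rw [Set.mem_singleton_iff] at hxu
    have hgx := hgap x hxV hxu
    have h1 : dot c (D x) = (b - dot a x)⁻¹ * (dot c x - dot c u) := by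
      rw [hD, dot_smul_right, dot_sub_right]
    have h2 : dot c x - dot c u = (b - dot a x) * dot c (D x) := by
      rw [h1]; field_simp
    rw [hf, dot_add_left, dot_add_left, dot_smul_left, dot_smul_left, ← hb]
    linear_combination (-1 : ℝ) * h2
  have hble : ∀ x ∈ V, dot f x ≤ dot f u := by
    intro x hxV
    rcases eq_or_ne x u with rfl | hne
    · exact le_rfl
    have hxS : x ∈ V \ {u} := ⟨hxV, hne⟩
    have h1 := hcomp x hxS
    have hle : dot c (D x) ≤ m := hxsmax x ((Set.Finite.mem_toFinset hSfin).2 hxS)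
    nlinarith [hgap x hxV hne]
  have hEset : {x ∈ V | dot f x = dot f u} = {u, xs} := by
    apply Set.Subset.antisymm
    · rintro x ⟨hxV, hxe⟩
      rcases eq_or_ne x u with rfl | hne
      · exact Set.mem_insert _ _
      rcases eq_or_ne x xs with rfl | hnexs
      · exact Set.mem_insert_of_mem _ rfl
      · exfalso
        have h1 := hcomp x ⟨hxV, hne⟩
        have h2 := hcd x ⟨hxV, hne⟩ hnexs
        have h3 := hgap x hxV hne
        nlinarith
    · intro x hx
      rcases hx with rfl | hx
      · exact ⟨hu, rfl⟩
      · rw [Set.mem_singleton_iff] at hx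
        subst hx
        have h1 := hcomp x hxsS
        rw [← hm, sub_self, mul_zero] at h1
        exact ⟨hxsS.1, by linarith⟩
  have hneu : xs ≠ u := by
    have := hxsS.2
    rwa [Set.mem_singleton_iff] at this
  refine ⟨xs, hxsS.1, hneu, hneu.symm, ?_⟩
  refine ⟨f, dot f u, hull_bound hble, ?_⟩
  rw [face_eq hble, hEset, convexHull_pair]

lemma edge_lift {V : Set (Fin d → ℝ)} (hfin : V.Finite)
    (hV : ∀ v ∈ V, ∀ i, v i = 0 ∨ v i = 1) (i0 : Fin d) {cc : ℝ} (hcc : cc = 0 ∨ cc = 1)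
    {w z : Fin d → ℝ}
    (he : IsEdgeOf (convexHull ℝ {x ∈ V | x i0 = cc}) w z) :
    IsEdgeOf (convexHull ℝ V) w z := by
  classical
  obtain ⟨hwz, f, e, hfb, hfe⟩ := he
  set V' : Set (Fin d → ℝ) := {x ∈ V | x i0 = cc} with hV'def
  set g : Fin d → ℝ := fun j => if j = i0 then 2 * cc - 1 else 0 with hg
  have hgdot : ∀ x : Fin d → ℝ, dot g x = (2 * cc - 1) * x i0 := by
    intro x
    rw [dot, Finset.sum_eq_single i0 (fun j _ hj => by simp [hg, hj]) (by simp)]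
    simp [hg]
  have hgeq : ∀ x ∈ V, x i0 = cc → dot g x = cc := by
    intro x hx hxc
    rw [hgdot, hxc]
    rcases hcc with rfl | rfl <;> norm_num
  have hgne : ∀ x ∈ V, x i0 ≠ cc → dot g x = cc - 1 := by
    intro x hx hxc
    rw [hgdot]
    rcases hV x hx i0 with h0 | h0 <;> rw [h0] <;>
      rcases hcc with rfl | rfl <;> first | (exact absurd h0 hxc) | norm_num
  -- V' nonempty via w
  have hwseg : w ∈ segment ℝ w z := left_mem_segment ℝ w z
  have hwmem : w ∈ convexHull ℝ V' ∧ dot f w = e := by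
    have := hwseg; rw [hfe] at this; exact this
  have hV'ne : V'.Nonempty := by
    rcases Set.eq_empty_or_nonempty V' with h | h
    · exfalso; have := hwmem.1; rw [h] at this; simp at this
    · exact h
  have hV'fin : V'.Finite := hfin.subset (fun x hx => hx.1)
  have hVne : V.Nonempty := hV'ne.mono (fun x hx => hx.1)
  have hfb' : ∀ x ∈ V', dot f x ≤ e := fun x hx => hfb x (subset_convexHull ℝ V' hx)
  -- e is attained on V'
  obtain ⟨x1, hx1, hx1max⟩ := hV'fin.toFinset.exists_max_image (dot f)
    (by rwa [Set.Finite.toFinset_nonempty])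
  rw [Set.Finite.mem_toFinset] at hx1
  have hx1e : dot f x1 = e := by
    have h1 : dot f x1 ≤ e := hfb' x1 hx1
    have h2 : dot f w ≤ dot f x1 :=
      hull_bound (fun y hy => hx1max y (hV'fin.mem_toFinset.2 hy)) w hwmem.1
    have := hwmem.2
    linarith
  obtain ⟨xM, hxM, hxMmax⟩ := hfin.toFinset.exists_max_image (dot f)
    (by rwa [Set.Finite.toFinset_nonempty])
  rw [Set.Finite.mem_toFinset] at hxM
  have hxMb : ∀ x ∈ V, dot f x ≤ dot f xM := fun x hx => hxMmax x (hfin.mem_toFinset.2 hx)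
  set N : ℝ := dot f xM - e + 1 with hN
  set f' : Fin d → ℝ := f + N • g with hf'
  have hf'x : ∀ x : Fin d → ℝ, dot f' x = dot f x + N * dot g x := by
    intro x; rw [hf', dot_add_left, dot_smul_left]
  have hble' : ∀ x ∈ V, dot f' x ≤ e + N * cc := by
    intro x hx
    rw [hf'x]
    by_cases hxc : x i0 = cc
    · rw [hgeq x hx hxc]
      have : dot f x ≤ e := hfb' x ⟨hx, hxc⟩
      nlinarith
    · rw [hgne x hx hxc]
      have := hxMb x hx
      nlinarith
  have hEq : {x ∈ V | dot f' x = e + N * cc} = {x ∈ V' | dot f x = e} := by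
    apply Set.Subset.antisymm
    · rintro x ⟨hx, hxe⟩
      rw [hf'x] at hxe
      by_cases hxc : x i0 = cc
      · rw [hgeq x hx hxc] at hxe
        exact ⟨⟨hx, hxc⟩, by linarith⟩
      · exfalso
        rw [hgne x hx hxc] at hxe
        have := hxMb x hx
        nlinarith
    · rintro x ⟨⟨hx, hxc⟩, hxe⟩
      refine ⟨hx, ?_⟩
      rw [hf'x, hgeq x hx hxc, hxe]
  refine ⟨hwz, f', e + N * cc, hull_bound hble', ?_⟩
  rw [face_eq hble', hEq, ← face_eq hfb', ← hfe]

lemma zo_cube_finite : ({x : Fin d → ℝ | ∀ i, x i = 0 ∨ x i = 1}).Finite := by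
  have : {x : Fin d → ℝ | ∀ i, x i = 0 ∨ x i = 1} ⊆
      Set.pi Set.univ (fun _ : Fin d => ({0, 1} : Set ℝ)) := by
    intro x hx i _
    rcases hx i with h | h <;> simp [h]
  exact (Set.Finite.pi (fun _ => (Set.finite_singleton (1:ℝ)).insert 0)).subset this

lemma zo_eq_of_ne {p q r : ℝ} (hp : p = 0 ∨ p = 1) (hq : q = 0 ∨ q = 1)
    (hr : r = 0 ∨ r = 1) (h1 : q ≠ p) (h2 : r ≠ p) : q = r := by
  rcases hp with rfl | rfl <;> rcases hq with rfl | rfl <;> rcases hr with rfl | rfl <;>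
    first | rfl | (exact absurd rfl h1) | (exact absurd rfl h2)

lemma key_walk (n : ℕ) : ∀ (V : Set (Fin d → ℝ)),
    (∀ v ∈ V, ∀ i, v i = 0 ∨ v i = 1) →
    {i : Fin d | ∃ x ∈ V, ∃ y ∈ V, x i ≠ y i}.ncard ≤ n →
    ∀ u v : {v // IsVertexOf (convexHull ℝ V) v},
    ∃ p : (polytopeGraph (convexHull ℝ V)).Walk u v, p.length ≤ n := by
  induction n with
  | zero =>
    intro V hV hn u v
    have hfin : V.Finite := zo_cube_finite.subset hV
    have hNC : {i : Fin d | ∃ x ∈ V, ∃ y ∈ V, x i ≠ y i} = ∅ := by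
      rw [← Set.ncard_eq_zero (Set.toFinite _)]
      exact Nat.le_antisymm hn (Nat.zero_le _)
    have huv : u = v := by
      apply Subtype.ext
      funext i
      by_contra hi
      have : i ∈ {i : Fin d | ∃ x ∈ V, ∃ y ∈ V, x i ≠ y i} :=
        ⟨u.1, vertex_mem hfin u.2, v.1, vertex_mem hfin v.2, hi⟩
      rw [hNC] at this
      exact this
    subst huv
    exact ⟨SimpleGraph.Walk.nil, by simp⟩
  | succ n ih =>
    intro V hV hn u v
    have hfin : V.Finite := zo_cube_finite.subset hV
    rcases eq_or_ne u v with rfl | hne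
    · exact ⟨SimpleGraph.Walk.nil, by simp⟩
    have huv : u.1 ≠ v.1 := fun h => hne (Subtype.ext h)
    have hu : u.1 ∈ V := vertex_mem hfin u.2
    have hv : v.1 ∈ V := vertex_mem hfin v.2
    by_cases hA : ∃ i, u.1 i = v.1 i ∧ ∃ x ∈ V, ∃ y ∈ V, x i ≠ y i
    · obtain ⟨i0, hui, hNCmem⟩ := hA
      set cc : ℝ := u.1 i0 with hccdef
      have hcc : cc = 0 ∨ cc = 1 := hV u.1 hu i0
      set V' : Set (Fin d → ℝ) := {x ∈ V | x i0 = cc} with hV'def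
      have hV' : ∀ v ∈ V', ∀ i, v i = 0 ∨ v i = 1 := fun x hx => hV x hx.1
      have hfin' : V'.Finite := hfin.subset (fun x hx => hx.1)
      have hsub : {i : Fin d | ∃ x ∈ V', ∃ y ∈ V', x i ≠ y i} ⊂
          {i : Fin d | ∃ x ∈ V, ∃ y ∈ V, x i ≠ y i} := by
        constructor
        · rintro i ⟨x, hx, y, hy, hxy⟩
          exact ⟨x, hx.1, y, hy.1, hxy⟩
        · intro hcon
          have : i0 ∈ {i : Fin d | ∃ x ∈ V', ∃ y ∈ V', x i ≠ y i} := hcon hNCmem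
          obtain ⟨x, hx, y, hy, hxy⟩ := this
          exact hxy (hx.2.trans hy.2.symm)
      have hn' : {i : Fin d | ∃ x ∈ V', ∃ y ∈ V', x i ≠ y i}.ncard ≤ n := by
        have := Set.ncard_lt_ncard hsub (Set.toFinite _)
        exact Nat.lt_succ_iff.1 (lt_of_lt_of_le this hn)
      have huV' : u.1 ∈ V' := ⟨hu, rfl⟩
      have hvV' : v.1 ∈ V' := ⟨hv, hui.symm⟩
      obtain ⟨p', hp'⟩ := ih V' hV' hn' ⟨u.1, mem_is_vertex hV' huV'⟩ ⟨v.1, mem_is_vertex hV' hvV'⟩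
      let φ : polytopeGraph (convexHull ℝ V') →g polytopeGraph (convexHull ℝ V) :=
        ⟨fun x => ⟨x.1, mem_is_vertex hV (vertex_mem hfin' x.2).1⟩,
         fun hadj => edge_lift hfin hV i0 hcc hadj⟩
      refine ⟨(p'.map φ).copy (Subtype.ext rfl) (Subtype.ext rfl), ?_⟩
      rw [SimpleGraph.Walk.length_copy, SimpleGraph.Walk.length_map]
      exact le_trans hp' (Nat.le_succ n)
    · push_neg at hA
      obtain ⟨w, hwV, hwu, hedge⟩ := exists_edge hfin hV hu
        ⟨v.1, hv, fun h => huv (Set.mem_singleton_iff.1 h).symm⟩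
      obtain ⟨i0, hi0⟩ : ∃ i, w i ≠ u.1 i := by
        by_contra h; push_neg at h; exact hwu (funext h)
      have hNCmem : ∃ x ∈ V, ∃ y ∈ V, x i0 ≠ y i0 := ⟨w, hwV, u.1, hu, hi0⟩
      have huvi0 : u.1 i0 ≠ v.1 i0 := by
        intro h
        obtain ⟨x, hx, y, hy, hxy⟩ := hNCmem
        exact absurd (hA i0 h x hx y hy) hxy
      have hwv : w i0 = v.1 i0 :=
        zo_eq_of_ne (hV u.1 hu i0) (hV w hwV i0) (hV v.1 hv i0) hi0 (Ne.symm huvi0)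
      set cc : ℝ := v.1 i0 with hccdef
      have hcc : cc = 0 ∨ cc = 1 := hV v.1 hv i0
      set V' : Set (Fin d → ℝ) := {x ∈ V | x i0 = cc} with hV'def
      have hV' : ∀ x ∈ V', ∀ i, x i = 0 ∨ x i = 1 := fun x hx => hV x hx.1
      have hfin' : V'.Finite := hfin.subset (fun x hx => hx.1)
      have hsub : {i : Fin d | ∃ x ∈ V', ∃ y ∈ V', x i ≠ y i} ⊂
          {i : Fin d | ∃ x ∈ V, ∃ y ∈ V, x i ≠ y i} := by
        constructor
        · rintro i ⟨x, hx, y, hy, hxy⟩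
          exact ⟨x, hx.1, y, hy.1, hxy⟩
        · intro hcon
          have : i0 ∈ {i : Fin d | ∃ x ∈ V', ∃ y ∈ V', x i ≠ y i} := hcon hNCmem
          obtain ⟨x, hx, y, hy, hxy⟩ := this
          exact hxy (hx.2.trans hy.2.symm)
      have hn' : {i : Fin d | ∃ x ∈ V', ∃ y ∈ V', x i ≠ y i}.ncard ≤ n := by
        have := Set.ncard_lt_ncard hsub (Set.toFinite _)
        exact Nat.lt_succ_iff.1 (lt_of_lt_of_le this hn)
      have hwV' : w ∈ V' := ⟨hwV, hwv⟩
      have hvV' : v.1 ∈ V' := ⟨hv, rfl⟩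
      obtain ⟨p', hp'⟩ := ih V' hV' hn' ⟨w, mem_is_vertex hV' hwV'⟩ ⟨v.1, mem_is_vertex hV' hvV'⟩
      let φ : polytopeGraph (convexHull ℝ V') →g polytopeGraph (convexHull ℝ V) :=
        ⟨fun x => ⟨x.1, mem_is_vertex hV (vertex_mem hfin' x.2).1⟩,
         fun hadj => edge_lift hfin hV i0 hcc hadj⟩
      have hadj : (polytopeGraph (convexHull ℝ V)).Adj u ⟨w, mem_is_vertex hV hwV⟩ :=
        hedge
      refine ⟨SimpleGraph.Walk.cons hadj ((p'.map φ).copy (Subtype.ext rfl) (Subtype.ext rfl)), ?_⟩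
      rw [SimpleGraph.Walk.length_cons, SimpleGraph.Walk.length_copy,
        SimpleGraph.Walk.length_map]
      exact Nat.succ_le_succ hp'
  
end Aux

/-- Naddef's theorem: every 0/1-polytope in `ℝ^d` has graph diameter at most `d`. -/
theorem zero_one_polytope_diameter (d : ℕ) (V : Set (Fin d → ℝ))
    (hV : ∀ v ∈ V, ∀ i, v i = 0 ∨ v i = 1)
    (P : Set (Fin d → ℝ)) (hP : P = convexHull ℝ V) :
    ∀ u v : {v // IsVertexOf P v}, (polytopeGraph P).dist u v ≤ d := by
  subst hP
  intro u v
  have hn : {i : Fin d | ∃ x ∈ V, ∃ y ∈ V, x i ≠ y i}.ncard ≤ d := by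
    have h1 := Set.ncard_le_ncard
      (Set.subset_univ {i : Fin d | ∃ x ∈ V, ∃ y ∈ V, x i ≠ y i}) Set.finite_univ
    simpa [Set.ncard_univ] using h1
  obtain ⟨p, hp⟩ := key_walk d V hV hn u v
  exact le_trans (SimpleGraph.dist_le p) hp
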